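/- arXiv:math/0101239 — 2 statements merged into one kernel-verified Lean document; each statement's English description precedes it below -/
import Mathlib

section
/- Let G be a compact group, p_t the heat kernel (central probability densities forming a convolution semigroup with p_t → δ_1 weakly as t → 0). For any continuous f on G^n and any x ∈ G, lim_{t→0} ∫_{G^n} f(g_1,…,g_n) p_t(g_n⋯g_1 x⁻¹) dg_1⋯dg_n = ν_x^n(f), the conditional Haar measure of f. -/
open MeasureTheory Filter

/-- Continuity of the reversed product of a tuple. -/
private lemma cont_revprod {G : Type*} [Monoid G] [TopologicalSpace G] [ContinuousMul G]
    (m : ℕ) : Continuous fun r : Fin m → G => (List.ofFn r).reverse.prod := by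
  simp only [List.ofFn_eq_map, ← List.map_reverse]
  exact continuous_list_prod _ fun i _ => continuous_apply i

/-- Continuity of `Fin.cons`. -/
private lemma cont_finCons {X G : Type*} [TopologicalSpace X] [TopologicalSpace G] {m : ℕ}
    {v : X → G} {r : X → Fin m → G} (hv : Continuous v) (hr : Continuous r) :
    Continuous fun a => (Fin.cons (v a) (r a) : Fin (m + 1) → G) := by
  apply continuous_pi; intro j
  refine Fin.cases ?_ ?_ j
  · simpa using hv
  · intro i; simpa using (show Continuous fun a => r a i from (continuous_apply i).comp hr)

/-- Any continuous real-valued function on a finite power of a compact Hausdorff space is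
measurable with respect to the product σ-algebra, by Stone–Weierstrass. -/
private lemma measurable_of_continuous_pi_t2 {Q : Type*} [TopologicalSpace Q] [CompactSpace Q]
    [T2Space Q] [MeasurableSpace Q] [OpensMeasurableSpace Q] {k : ℕ} {f : (Fin k → Q) → ℝ}
    (hf : Continuous f) : Measurable f := by
  set S : Set C((Fin k → Q), ℝ) :=
    ⋃ i : Fin k, Set.range fun ψ : C(Q, ℝ) => ψ.comp ⟨fun g => g i, continuous_apply i⟩ with hS
  set A : Subalgebra ℝ C((Fin k → Q), ℝ) := Algebra.adjoin ℝ S with hA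
  have hsep : A.SeparatesPoints := by
    intro g h hgh
    obtain ⟨i, hi⟩ := Function.ne_iff.1 hgh
    obtain ⟨ψ, hψ0, hψ1, -⟩ := exists_continuous_zero_one_of_isClosed
      (isClosed_singleton (x := g i)) (isClosed_singleton (x := h i))
      (Set.disjoint_singleton.2 hi)
    refine ⟨_, ⟨ψ.comp ⟨fun g => g i, continuous_apply i⟩, ?_, rfl⟩, ?_⟩
    · exact Algebra.subset_adjoin (Set.mem_iUnion.2 ⟨i, ⟨ψ, rfl⟩⟩)
    · simp only [ContinuousMap.comp_apply, ContinuousMap.coe_mk]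
      rw [hψ0 (Set.mem_singleton _), hψ1 (Set.mem_singleton _)]
      simp
  have htop := ContinuousMap.subalgebra_topologicalClosure_eq_top_of_separatesPoints A hsep
  have hmem : (⟨f, hf⟩ : C((Fin k → Q), ℝ)) ∈ closure (A : Set C((Fin k → Q), ℝ)) := by
    have : (⟨f, hf⟩ : C((Fin k → Q), ℝ)) ∈ A.topologicalClosure := htop ▸ trivial
    exact this
  obtain ⟨u, hu, hulim⟩ := mem_closure_iff_seq_limit.1 hmem
  have humeas : ∀ nn : ℕ, Measurable ((u nn : C((Fin k → Q), ℝ)) : (Fin k → Q) → ℝ) := by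
    intro nn
    have hmem' : u nn ∈ A := hu nn
    refine Algebra.adjoin_induction (fun φ hφ => ?_) (fun r => measurable_const)
      (fun φ χ _ _ hφ hχ => hφ.add hχ) (fun φ χ _ _ hφ hχ => hφ.mul hχ) hmem'
    obtain ⟨i, ψ, rfl⟩ := by
      simpa only [hS, Set.mem_iUnion, Set.mem_range] using hφ
    exact (ψ.continuous.measurable).comp (measurable_pi_apply i)
  have hpt : Tendsto (fun nn => ((u nn : C((Fin k → Q), ℝ)) : (Fin k → Q) → ℝ)) atTop
      (nhds f) := by
    rw [tendsto_pi_nhds]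
    intro g
    exact ((continuous_eval_const g).tendsto _).comp hulim
  exact measurable_of_tendsto_metrizable humeas hpt

/-- Any continuous real-valued function on a finite power of a compact topological group is
measurable with respect to the product σ-algebra. -/
private lemma measurable_of_continuous_pi {G : Type*} [Group G] [TopologicalSpace G]
    [IsTopologicalGroup G] [CompactSpace G] [MeasurableSpace G] [BorelSpace G] {k : ℕ}
    {f : (Fin k → G) → ℝ} (hf : Continuous f) : Measurable f := by
  letI : MeasurableSpace (SeparationQuotient G) := borel (SeparationQuotient G)
  haveI : BorelSpace (SeparationQuotient G) := ⟨rfl⟩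
  haveI : CompactSpace (SeparationQuotient G) :=
    ⟨(SeparationQuotient.surjective_mk (X := G)).range_eq ▸
      isCompact_range (SeparationQuotient.continuous_mk (X := G))⟩
  set q : (Fin k → G) → (Fin k → SeparationQuotient G) :=
    Pi.map fun _ => (SeparationQuotient.mk : G → SeparationQuotient G) with hq
  have hq_oq : IsOpenQuotientMap q :=
    IsOpenQuotientMap.piMap fun _ => SeparationQuotient.isOpenQuotientMap_mk
  have hfq : ∀ g g' : Fin k → G, q g = q g' → f g = f g' := by
    intro g g' hgg
    have hins : Inseparable g g' := by
      rw [inseparable_pi]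
      intro i
      exact SeparationQuotient.mk_eq_mk.1 (congrFun hgg i)
    exact (hins.map hf).eq
  set ftil : (Fin k → SeparationQuotient G) → ℝ := fun y => f (Function.surjInv hq_oq.surjective y) with hftil
  have hcomp : ∀ g, ftil (q g) = f g := by
    intro g
    exact hfq _ _ (Function.surjInv_eq hq_oq.surjective (q g))
  have hftilc : Continuous ftil := by
    rw [hq_oq.isQuotientMap.continuous_iff]
    have : ftil ∘ q = f := funext hcomp
    rw [this]; exact hf
  have hqm : Measurable q := by
    apply measurable_pi_lambda
    intro i
    exact (SeparationQuotient.continuous_mk.measurable).comp (measurable_pi_apply i)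
  have : f = ftil ∘ q := (funext hcomp).symm
  rw [this]
  exact (measurable_of_continuous_pi_t2 hftilc).comp hqm

private lemma integrable_of_bounded_meas {α : Type*} [MeasurableSpace α] {ν : Measure α}
    [IsFiniteMeasure ν] {ψ : α → ℝ} (hm : Measurable ψ) {C : ℝ} (hC : ∀ a, ‖ψ a‖ ≤ C) :
    Integrable ψ ν :=
  ⟨hm.aestronglyMeasurable, HasFiniteIntegral.of_bounded (Filter.Eventually.of_forall hC)⟩

private lemma bound_of_cont {α : Type*} [TopologicalSpace α] [CompactSpace α] {ψ : α → ℝ}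
    (h : Continuous ψ) : ∃ C, ∀ a, ‖ψ a‖ ≤ C := by
  obtain ⟨C, hC⟩ := (isCompact_range h.norm).bddAbove
  exact ⟨C, fun a => hC ⟨a, rfl⟩⟩

/-- Let `p` be the heat kernel on a compact group `G` (a central positive convolution
semigroup of probability densities converging weakly to the Dirac mass at `1` as
`t → 0⁺`), and let `ν` be the conditional Haar measure conditioning `gₙ⋯g₁ = x`. Then
for any continuous `f` on `Gⁿ`,
`lim_{t→0⁺} ∫ f(g₁,…,gₙ) p_t(gₙ⋯g₁ x⁻¹) dg₁⋯dgₙ = ∫ f dν`. -/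
theorem heat_kernel_tendsto_conditional_haar
    {G : Type*} [Group G] [TopologicalSpace G] [IsTopologicalGroup G] [CompactSpace G]
    [MeasurableSpace G] [BorelSpace G]
    (μ : Measure G) [μ.IsHaarMeasure] [IsProbabilityMeasure μ]
    (p : ℝ → G → ℝ)
    (hpos : ∀ t : ℝ, 0 < t → ∀ g, 0 < p t g)
    (hcont : ∀ t : ℝ, 0 < t → Continuous (p t))
    (hcentral : ∀ t : ℝ, 0 < t → ∀ x y : G, p t (x * y) = p t (y * x))
    (hprob : ∀ t : ℝ, 0 < t → ∫ g, p t g ∂μ = 1)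
    (hconv : ∀ s t : ℝ, 0 < s → 0 < t → ∀ x : G,
      ∫ y, p s (x * y⁻¹) * p t y ∂μ = p (s + t) x)
    (hdelta : ∀ f : G → ℝ, Continuous f →
      Tendsto (fun t => ∫ g, f g * p t g ∂μ) (nhdsWithin 0 (Set.Ioi 0)) (nhds (f 1)))
    (n : ℕ) (hn : 0 < n) (x : G)
    (ν : Measure (Fin n → G)) [IsProbabilityMeasure ν]
    (hν : ∀ (f : (Fin n → G) → ℝ), Continuous f → ∀ i : Fin n,
      ∫ g, f g ∂ν =
        ∫ g, f (Function.update g i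
            ((((List.ofFn g).drop ((i : ℕ) + 1)).reverse.prod)⁻¹ * x *
              (((List.ofFn g).take (i : ℕ)).reverse.prod)⁻¹))
          ∂(Measure.pi fun _ : Fin n => μ)) :
    ∀ f : (Fin n → G) → ℝ, Continuous f →
      Tendsto (fun t => ∫ g, f g * p t ((List.ofFn g).reverse.prod * x⁻¹)
          ∂(Measure.pi fun _ : Fin n => μ))
        (nhdsWithin 0 (Set.Ioi 0)) (nhds (∫ g, f g ∂ν)) := by
  obtain ⟨m, rfl⟩ : ∃ m, n = m + 1 := ⟨n - 1, (Nat.succ_pred_eq_of_pos hn).symm⟩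
  intro f hf
  set π : Measure (Fin (m + 1) → G) := Measure.pi fun _ => μ with hπdef
  set π' : Measure (Fin m → G) := Measure.pi fun _ => μ with hπ'def
  have hPcont : Continuous fun r : Fin m → G => (List.ofFn r).reverse.prod := cont_revprod m
  set a : (Fin m → G) → G := fun r => ((List.ofFn r).reverse.prod)⁻¹ * x with hadef
  have ha_cont : Continuous a := (hPcont.inv).mul continuous_const
  -- measurability of continuous real functions on products of copies of G
  have mpi : ∀ {k : ℕ} (ψ : (Fin k → G) → ℝ), Continuous ψ → Measurable ψ :=
    fun ψ hψ => measurable_of_continuous_pi hψ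
  have mprod : ∀ ψ : G × (Fin m → G) → ℝ, Continuous ψ → Measurable ψ := by
    intro ψ hψ
    have h1 : Continuous fun g : Fin (m + 1) → G => ψ (g 0, g ∘ Fin.succ) :=
      hψ.comp ((continuous_apply 0).prodMk (continuous_pi fun i => continuous_apply i.succ))
    have h2 : ∀ hr : G × (Fin m → G), ψ hr
        = (fun g : Fin (m + 1) → G => ψ (g 0, g ∘ Fin.succ))
            (Fin.cons hr.1 hr.2 : Fin (m + 1) → G) := by
      intro hr
      have hc : (((Fin.cons hr.1 hr.2 : Fin (m + 1) → G)) 0,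
          ((Fin.cons hr.1 hr.2 : Fin (m + 1) → G)) ∘ Fin.succ) = hr :=
        Prod.ext (by simp) (funext fun i => by simp)
      exact (congrArg ψ hc).symm
    have h3 : Measurable fun hr : G × (Fin m → G) =>
        (Fin.cons hr.1 hr.2 : Fin (m + 1) → G) := by
      apply measurable_pi_lambda
      intro j
      refine Fin.cases ?_ ?_ j
      · simpa using measurable_fst
      · intro i; simpa using (show Measurable fun c : G × (Fin m → G) => c.2 i from (measurable_pi_apply i).comp measurable_snd)
    have : ψ = (fun g : Fin (m + 1) → G => ψ (g 0, g ∘ Fin.succ)) ∘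
        fun hr : G × (Fin m → G) => (Fin.cons hr.1 hr.2 : Fin (m + 1) → G) := funext h2
    rw [this]
    exact (mpi _ h1).comp h3
  have mprod' : ∀ ψ : (Fin m → G) × G → ℝ, Continuous ψ → Measurable ψ := by
    intro ψ hψ
    have : ψ = (fun kr : G × (Fin m → G) => ψ (kr.2, kr.1)) ∘ fun rk => (rk.2, rk.1) := rfl
    rw [this]
    exact (mprod _ (hψ.comp (continuous_snd.prodMk continuous_fst))).comp
      (measurable_snd.prodMk measurable_fst)
  -- `Fin.cons` facts
  have hconsprod : ∀ (h : G) (r : Fin m → G),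
      (List.ofFn (Fin.cons h r)).reverse.prod = (List.ofFn r).reverse.prod * h := by
    intro h r
    rw [List.ofFn_succ]
    simp
  have hconsdrop : ∀ (h : G) (r : Fin m → G),
      (List.ofFn (Fin.cons h r)).drop 1 = List.ofFn r := by
    intro h r; rw [List.ofFn_succ]; simp
  -- measure-preserving decomposition of the product measure
  have mp := measurePreserving_piFinSuccAbove (fun _ : Fin (m + 1) => μ) 0
  set T := (MeasurableEquiv.piFinSuccAbove (fun _ : Fin (m + 1) => G) 0).symm with hTdef
  have mpT : MeasurePreserving T (μ.prod π') π := mp.symm _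
  have hT : ∀ hr : G × (Fin m → G), T hr = Fin.cons hr.1 hr.2 := fun hr =>
    Fin.insertNth_zero' hr.1 hr.2
  have hdecomp : ∀ φ : (Fin (m + 1) → G) → ℝ,
      ∫ g, φ g ∂π = ∫ hr : G × (Fin m → G), φ (Fin.cons hr.1 hr.2) ∂(μ.prod π') := by
    intro φ
    rw [← mpT.integral_comp' φ]
    exact integral_congr_ae (Filter.Eventually.of_forall fun hr => congrArg φ (hT hr))
  -- the averaged function F
  set F : G → ℝ := fun k => ∫ r, f (Fin.cons (a r * k) r) ∂π' with hFdef
  have hcons2 : Continuous fun kr : G × (Fin m → G) => f (Fin.cons (a kr.2 * kr.1) kr.2) :=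
    hf.comp (cont_finCons ((ha_cont.comp continuous_snd).mul continuous_fst) continuous_snd)
  obtain ⟨C, hCb⟩ := bound_of_cont hf
  have intF : ∀ k : G, Integrable (fun r => f (Fin.cons (a r * k) r)) π' := fun k =>
    integrable_of_bounded_meas (mpi _ (hcons2.comp (Continuous.prodMk_right k)))
      (fun r => hCb _)
  have hFcont : Continuous F := by
    rw [continuous_iff_continuousAt]
    intro k0
    rw [ContinuousAt, Metric.tendsto_nhds]
    intro ε hε
    set Ψ : (Fin (m + 1) → G) × G → ℝ := fun gs =>
      f (Fin.cons (gs.1 0 * gs.2) (fun i => gs.1 i.succ)) - f gs.1 with hΨdef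
    have hΨcont : Continuous Ψ :=
      (hf.comp (cont_finCons (((continuous_apply 0).comp continuous_fst).mul continuous_snd)
        (continuous_pi fun i => (continuous_apply i.succ).comp continuous_fst))).sub
        (hf.comp continuous_fst)
    have hU : IsOpen {gs : (Fin (m + 1) → G) × G | |Ψ gs| < ε / 2} :=
      isOpen_lt hΨcont.abs continuous_const
    have hsub : (Set.univ : Set (Fin (m + 1) → G)) ×ˢ ({1} : Set G) ⊆
        {gs : (Fin (m + 1) → G) × G | |Ψ gs| < ε / 2} := by
      rintro ⟨g, s⟩ ⟨-, hs⟩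
      have hs1 : s = 1 := hs
      have hzero : Ψ (g, s) = 0 := by
        subst hs1
        simp only [hΨdef, mul_one]
        rw [show (Fin.cons (g 0) (fun i => g i.succ) : Fin (m + 1) → G) = g from
          funext fun j => Fin.cases (by simp) (fun i => by simp) j]
        ring
      simp only [Set.mem_setOf_eq, hzero, abs_zero]
      exact half_pos hε
    obtain ⟨u, v, hu, hv, hu2, hv2, huv⟩ := generalized_tube_lemma isCompact_univ
      isCompact_singleton hU hsub
    have hv1 : (1 : G) ∈ v := hv2 rfl
    have hnb : {k : G | k0⁻¹ * k ∈ v} ∈ nhds k0 := by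
      apply IsOpen.mem_nhds (hv.preimage (continuous_const.mul continuous_id))
      simpa using hv1
    filter_upwards [hnb] with k hk
    have hbound : ∀ r : Fin m → G,
        ‖f (Fin.cons (a r * k) r) - f (Fin.cons (a r * k0) r)‖ ≤ ε / 2 := by
      intro r
      have hmem : ((Fin.cons (a r * k0) r : Fin (m + 1) → G), k0⁻¹ * k) ∈ u ×ˢ v :=
        ⟨hu2 trivial, hk⟩
      have hlt := huv hmem
      have harg : Ψ ((Fin.cons (a r * k0) r : Fin (m + 1) → G), k0⁻¹ * k)
          = f (Fin.cons (a r * k) r) - f (Fin.cons (a r * k0) r) := by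
        simp only [hΨdef, Fin.cons_zero, Fin.cons_succ]
        rw [mul_assoc, mul_inv_cancel_left]
      rw [Set.mem_setOf_eq, harg] at hlt
      exact le_of_lt (by simpa [Real.norm_eq_abs] using hlt)
    have hdiff : F k - F k0
        = ∫ r, (f (Fin.cons (a r * k) r) - f (Fin.cons (a r * k0) r)) ∂π' :=
      (integral_sub (intF k) (intF k0)).symm
    have hle := norm_integral_le_of_norm_le_const (μ := π')
      (f := fun r => f (Fin.cons (a r * k) r) - f (Fin.cons (a r * k0) r))
      (Filter.Eventually.of_forall hbound)
    have hle' : ‖∫ r, (f (Fin.cons (a r * k) r) - f (Fin.cons (a r * k0) r)) ∂π'‖ ≤ ε / 2 := by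
      simpa using hle
    rw [Real.dist_eq, hdiff, ← Real.norm_eq_abs]
    exact lt_of_le_of_lt hle' (half_lt_self hε)
  -- main identity for t > 0
  have key : ∀ t : ℝ, 0 < t →
      (∫ g, f g * p t ((List.ofFn g).reverse.prod * x⁻¹) ∂π) = ∫ k, F k * p t k ∂μ := by
    intro t ht
    have hpt := hcont t ht
    rw [hdecomp]
    have e1 : ∀ hr : G × (Fin m → G),
        f (Fin.cons hr.1 hr.2) * p t ((List.ofFn (Fin.cons hr.1 hr.2)).reverse.prod * x⁻¹)
          = f (Fin.cons hr.1 hr.2) * p t ((List.ofFn hr.2).reverse.prod * hr.1 * x⁻¹) := by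
      intro hr; rw [hconsprod]
    rw [integral_congr_ae (Filter.Eventually.of_forall e1)]
    have hcont1 : Continuous fun hr : G × (Fin m → G) =>
        f (Fin.cons hr.1 hr.2) * p t ((List.ofFn hr.2).reverse.prod * hr.1 * x⁻¹) :=
      (hf.comp (cont_finCons continuous_fst continuous_snd)).mul
        (hpt.comp (((hPcont.comp continuous_snd).mul continuous_fst).mul continuous_const))
    obtain ⟨C1, hC1⟩ := bound_of_cont hcont1
    have hint1 : Integrable
        (fun hr : G × (Fin m → G) =>
          f (Fin.cons hr.1 hr.2) * p t ((List.ofFn hr.2).reverse.prod * hr.1 * x⁻¹))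
        (μ.prod π') := integrable_of_bounded_meas (mprod _ hcont1) hC1
    rw [integral_prod_symm _ hint1]
    have e2 : ∀ r : Fin m → G,
        (∫ h, f (Fin.cons h r) * p t ((List.ofFn r).reverse.prod * h * x⁻¹) ∂μ)
          = ∫ k, f (Fin.cons (a r * k) r) * p t k ∂μ := by
      intro r
      have base := integral_mul_left_eq_self (μ := μ)
        (fun h => f (Fin.cons h r) * p t ((List.ofFn r).reverse.prod * h * x⁻¹)) (a r)
      beta_reduce at base
      rw [← base]
      refine integral_congr_ae (Filter.Eventually.of_forall fun k => ?_)
      beta_reduce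
      have harg : (List.ofFn r).reverse.prod * (a r * k) * x⁻¹ = x * (k * x⁻¹) := by
        simp [hadef, mul_assoc]
      rw [harg, hcentral t ht x (k * x⁻¹), inv_mul_cancel_right]
    rw [integral_congr_ae (Filter.Eventually.of_forall e2)]
    have hcont2 : Continuous
        (Function.uncurry fun r k => f (Fin.cons (a r * k) r) * p t k) :=
      (hcons2.comp (continuous_snd.prodMk continuous_fst)).mul (hpt.comp continuous_snd)
    obtain ⟨C2, hC2⟩ := bound_of_cont hcont2
    have hint2 : Integrable
        (Function.uncurry fun r k => f (Fin.cons (a r * k) r) * p t k) (π'.prod μ) :=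
      integrable_of_bounded_meas (mprod' _ hcont2) hC2
    rw [integral_integral_swap hint2]
    simp only [integral_mul_const]
    rfl
  -- identification of the limit value
  have hF1 : F 1 = ∫ g, f g ∂ν := by
    have step : (∫ g, f g ∂ν)
        = ∫ hr : G × (Fin m → G), f (Fin.cons (a hr.2) hr.2) ∂(μ.prod π') := by
      rw [hν f hf 0, hdecomp]
      refine integral_congr_ae (Filter.Eventually.of_forall fun hr => ?_)
      beta_reduce
      congr 1
      rw [Fin.update_cons_zero]
      congr 1
      simp [hconsdrop, hadef]
    have hcont3 : Continuous fun r : Fin m → G => f (Fin.cons (a r) r) :=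
      hf.comp (cont_finCons ha_cont continuous_id)
    have step2 : (∫ hr : G × (Fin m → G), f (Fin.cons (a hr.2) hr.2) ∂(μ.prod π'))
        = ∫ r, f (Fin.cons (a r) r) ∂π' := by
      have hmap : (μ.prod π').map Prod.snd = π' := by
        simp [Measure.map_snd_prod]
      have h1 : (∫ hr : G × (Fin m → G), f (Fin.cons (a hr.2) hr.2) ∂(μ.prod π'))
          = ∫ r, f (Fin.cons (a r) r) ∂((μ.prod π').map Prod.snd) :=
        (integral_map measurable_snd.aemeasurable
          (mpi _ hcont3).aestronglyMeasurable).symm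
      rw [h1, hmap]
    rw [step, step2, hFdef]
    simp
  rw [← hF1]
  refine Tendsto.congr' ?_ (hdelta F hFcont)
  filter_upwards [self_mem_nhdsWithin] with t ht
  exact (key t ht).symm
end

section
/- Let G be a compact group and α an irreducible finite-dimensional unitary representation with character χ_α. Then for all x ∈ G, ∫_{G×G} χ_α(a b a⁻¹ b⁻¹ x) da db = χ_α(x) / (dim α)². -/
open MeasureTheory

/-- A matrix representation is irreducible if the only invariant subspaces are `⊥` and `⊤`. -/
def MatRepIrreducible {n : ℕ} {G : Type*} [Group G]
    (ρ : G →* Matrix.GeneralLinearGroup (Fin n) ℂ) : Prop :=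
  ∀ U : Submodule ℂ (Fin n → ℂ),
    (∀ g : G, ∀ v ∈ U, ((ρ g : Matrix (Fin n) (Fin n) ℂ)).mulVec v ∈ U) → U = ⊥ ∨ U = ⊤

section Aux

variable {G : Type*} [Group G] [TopologicalSpace G] [IsTopologicalGroup G] [CompactSpace G]
    [MeasurableSpace G] [BorelSpace G]

lemma cont_integrable_aux (μ : Measure G) [IsProbabilityMeasure μ]
    {f : G → ℂ} (hf : Continuous f) : Integrable f μ :=
  hf.integrable_of_hasCompactSupport (HasCompactSupport.of_compactSpace f)

/-- Schur orthogonality: the averaged conjugate `∫ ρ(a) M ρ(a)⁻¹ da` is the scalar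
matrix `(tr M / n) • 1`. -/
theorem schur_integral_aux (μ : Measure G) [μ.IsHaarMeasure] [IsProbabilityMeasure μ]
    (n : ℕ) (hn : 0 < n)
    (ρ : G →* Matrix.GeneralLinearGroup (Fin n) ℂ)
    (hc : Continuous fun g => (ρ g : Matrix (Fin n) (Fin n) ℂ))
    (hirr : MatRepIrreducible ρ) (M : Matrix (Fin n) (Fin n) ℂ) :
    (Matrix.of fun i j =>
        ∫ a, ((ρ a : Matrix (Fin n) (Fin n) ℂ) * M * (ρ a⁻¹ : Matrix (Fin n) (Fin n) ℂ)) i j ∂μ)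
      = (M.trace / n) • (1 : Matrix (Fin n) (Fin n) ℂ) := by
  set R : G → Matrix (Fin n) (Fin n) ℂ := fun g => ρ g with hR
  have Rmul : ∀ a b : G, R (a * b) = R a * R b := fun a b => by
    simp only [hR, map_mul]; rfl
  have Rone : R 1 = 1 := by simp only [hR, map_one]; rfl
  have Rinvmul : ∀ a : G, R a⁻¹ * R a = 1 := fun a => by
    rw [← Rmul, inv_mul_cancel, Rone]
  set F : G → Matrix (Fin n) (Fin n) ℂ := fun a => R a * M * R a⁻¹ with hF
  have hFc : Continuous F := (hc.matrix_mul continuous_const).matrix_mul (hc.comp continuous_inv)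
  have hFe : ∀ i j, Integrable (fun a => F a i j) μ :=
    fun i j => cont_integrable_aux μ (hFc.matrix_elem i j)
  set T : Matrix (Fin n) (Fin n) ℂ := Matrix.of (fun i j => ∫ a, F a i j ∂μ) with hT
  have hmulT : ∀ (A : Matrix (Fin n) (Fin n) ℂ) (i j : Fin n),
      (A * T) i j = ∫ a, (A * F a) i j ∂μ := by
    intro A i j
    simp only [Matrix.mul_apply, hT, Matrix.of_apply]
    rw [integral_finset_sum _ (fun k _ => (hFe k j).const_mul _)]
    simp only [integral_const_mul]
  have hTmul : ∀ (A : Matrix (Fin n) (Fin n) ℂ) (i j : Fin n),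
      (T * A) i j = ∫ a, (F a * A) i j ∂μ := by
    intro A i j
    simp only [Matrix.mul_apply, hT, Matrix.of_apply]
    rw [integral_finset_sum _ (fun k _ => (hFe i k).mul_const _)]
    simp only [integral_mul_const]
  have hcomm : ∀ g : G, R g * T = T * R g := by
    intro g
    ext i j
    rw [hmulT, hTmul]
    have hstep : ∀ a : G, (R g * F a) i j = (F (g * a) * R g) i j := by
      intro a
      have h1 : F (g * a) = R g * F a * R g⁻¹ := by
        simp only [hF, mul_inv_rev, Rmul, mul_assoc]
      rw [h1, mul_assoc (R g * F a) (R g⁻¹) (R g), Rinvmul, mul_one]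
    calc ∫ a, (R g * F a) i j ∂μ
        = ∫ a, (F (g * a) * R g) i j ∂μ := by simp_rw [hstep]
      _ = ∫ a, (F a * R g) i j ∂μ :=
          integral_mul_left_eq_self (fun a => (F a * R g) i j) g
  have hnt : Nontrivial (Fin n → ℂ) := by
    refine ⟨Pi.single ⟨0, hn⟩ 1, 0, fun h => ?_⟩
    have := congrFun h ⟨0, hn⟩
    simp at this
  obtain ⟨c, hce⟩ := Module.End.exists_eigenvalue (T.mulVecLin)
  obtain ⟨v, hv⟩ := hce.exists_hasEigenvector
  set U : Submodule ℂ (Fin n → ℂ) := LinearMap.ker (T.mulVecLin - c • LinearMap.id) with hU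
  have hmem : ∀ w, w ∈ U ↔ T.mulVec w = c • w := by
    intro w
    simp [hU, LinearMap.mem_ker, sub_eq_zero, Matrix.mulVecLin_apply]
  have hUinv : ∀ g : G, ∀ w ∈ U, (R g).mulVec w ∈ U := by
    intro g w hw
    rw [hmem] at hw ⊢
    rw [Matrix.mulVec_mulVec, ← hcomm g, ← Matrix.mulVec_mulVec, hw,
      Matrix.mulVec_smul]
  have hvU : v ∈ U := by
    rw [hmem]
    have := hv.apply_eq_smul
    simpa [Matrix.mulVecLin_apply] using this
  have hUtop : U = ⊤ := by
    rcases hirr U hUinv with h | h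
    · exact absurd (h ▸ hvU) (by simpa using hv.2)
    · exact h
  have hTv : ∀ w, T.mulVec w = c • w := fun w =>
    (hmem w).1 (hUtop ▸ Submodule.mem_top)
  have hTeq : T = c • (1 : Matrix (Fin n) (Fin n) ℂ) := by
    ext i j
    have h := congrFun (hTv (Pi.single j 1)) i
    simpa [Matrix.mulVec_single, Matrix.one_apply, Pi.single_apply, eq_comm,
      mul_comm] using h
  have htr : T.trace = M.trace := by
    simp only [Matrix.trace, Matrix.diag, hT, Matrix.of_apply]
    rw [← integral_finset_sum _ (fun i _ => hFe i i)]
    have hFtr : ∀ a, ∑ i, F a i i = M.trace := by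
      intro a
      have h1 : (F a).trace = M.trace := by
        rw [hF]
        rw [Matrix.trace_mul_cycle, Rinvmul, one_mul]
      simpa [Matrix.trace, Matrix.diag] using h1
    simp_rw [hFtr]
    simp [Matrix.trace, Matrix.diag]
  have hn0 : (n : ℂ) ≠ 0 := Nat.cast_ne_zero.mpr hn.ne'
  have hc' : c = M.trace / n := by
    have h1 : T.trace = c * n := by
      rw [hTeq]
      simp [Matrix.trace_smul, Matrix.trace_one, smul_eq_mul]
    rw [htr] at h1
    field_simp [h1]
    exact h1.symm
  rw [← hT] at *
  rw [hTeq, hc']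

end Aux

/-- For an irreducible unitary representation `α` of a compact group `G` with character
`χ_α`, one has `∫_{G×G} χ_α([a,b] x) da db = χ_α(x) / (dim α)²`, where `[a,b] = aba⁻¹b⁻¹`. -/
theorem character_commutator_integral
    {G : Type*} [Group G] [TopologicalSpace G] [IsTopologicalGroup G] [CompactSpace G]
    [MeasurableSpace G] [BorelSpace G]
    (μ : Measure G) [μ.IsHaarMeasure] [IsProbabilityMeasure μ]
    (n : ℕ) (hn : 0 < n)
    (ρ : G →* Matrix.GeneralLinearGroup (Fin n) ℂ)
    (hc : Continuous fun g => (ρ g : Matrix (Fin n) (Fin n) ℂ))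
    (hu : ∀ g, (ρ g : Matrix (Fin n) (Fin n) ℂ) ∈ Matrix.unitaryGroup (Fin n) ℂ)
    (hirr : MatRepIrreducible ρ) :
    ∀ x : G,
      ∫ a, ∫ b, ((ρ (a * b * a⁻¹ * b⁻¹ * x) : Matrix (Fin n) (Fin n) ℂ)).trace ∂μ ∂μ
        = ((ρ x : Matrix (Fin n) (Fin n) ℂ)).trace / ((n : ℂ) ^ 2) := by
  intro x
  have hn0 : (n : ℂ) ≠ 0 := Nat.cast_ne_zero.mpr hn.ne'
  have Rmul : ∀ a b : G, (ρ (a * b) : Matrix (Fin n) (Fin n) ℂ)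
      = (ρ a : Matrix (Fin n) (Fin n) ℂ) * (ρ b : Matrix (Fin n) (Fin n) ℂ) := fun a b => by
    simp only [map_mul]; rfl
  have hS := schur_integral_aux μ n hn ρ hc hirr
  have hSe : ∀ (M : Matrix (Fin n) (Fin n) ℂ) (i j : Fin n),
      (∫ a, ((ρ a : Matrix (Fin n) (Fin n) ℂ) * M * (ρ a⁻¹ : Matrix (Fin n) (Fin n) ℂ)) i j ∂μ)
        = (M.trace / n) * (if i = j then 1 else 0) := by
    intro M i j
    have h := hS M
    have h2 := congrFun (congrFun (congrArg (fun A => (A : Matrix (Fin n) (Fin n) ℂ)) h) i) j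
    simpa [Matrix.one_apply] using h2
  have contRinv : Continuous fun a : G => (ρ a⁻¹ : Matrix (Fin n) (Fin n) ℂ) :=
    hc.comp continuous_inv
  -- inner integral
  have inner_eq : ∀ a : G,
      (∫ b, ((ρ (a * b * a⁻¹ * b⁻¹ * x) : Matrix (Fin n) (Fin n) ℂ)).trace ∂μ)
        = ((ρ a⁻¹ : Matrix (Fin n) (Fin n) ℂ)).trace / n
            * ((ρ x : Matrix (Fin n) (Fin n) ℂ) * (ρ a : Matrix (Fin n) (Fin n) ℂ)).trace := by
    intro a
    have step1 : ∀ b : G, ((ρ (a * b * a⁻¹ * b⁻¹ * x) : Matrix (Fin n) (Fin n) ℂ)).trace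
        = ∑ i, ∑ j, ((ρ b : Matrix (Fin n) (Fin n) ℂ) * (ρ a⁻¹ : Matrix (Fin n) (Fin n) ℂ)
              * (ρ b⁻¹ : Matrix (Fin n) (Fin n) ℂ)) i j
            * ((ρ x : Matrix (Fin n) (Fin n) ℂ) * (ρ a : Matrix (Fin n) (Fin n) ℂ)) j i := by
      intro b
      have h1 : (ρ (a * b * a⁻¹ * b⁻¹ * x) : Matrix (Fin n) (Fin n) ℂ)
          = (ρ a : Matrix (Fin n) (Fin n) ℂ)
            * ((ρ b : Matrix (Fin n) (Fin n) ℂ) * (ρ a⁻¹ : Matrix (Fin n) (Fin n) ℂ)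
              * (ρ b⁻¹ : Matrix (Fin n) (Fin n) ℂ) * (ρ x : Matrix (Fin n) (Fin n) ℂ)) := by
        simp only [Rmul, mul_assoc]
      rw [h1, Matrix.trace_mul_comm]
      have h2 : ((ρ b : Matrix (Fin n) (Fin n) ℂ) * (ρ a⁻¹ : Matrix (Fin n) (Fin n) ℂ)
            * (ρ b⁻¹ : Matrix (Fin n) (Fin n) ℂ) * (ρ x : Matrix (Fin n) (Fin n) ℂ))
            * (ρ a : Matrix (Fin n) (Fin n) ℂ)
          = ((ρ b : Matrix (Fin n) (Fin n) ℂ) * (ρ a⁻¹ : Matrix (Fin n) (Fin n) ℂ)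
            * (ρ b⁻¹ : Matrix (Fin n) (Fin n) ℂ))
            * ((ρ x : Matrix (Fin n) (Fin n) ℂ) * (ρ a : Matrix (Fin n) (Fin n) ℂ)) := by
        simp only [mul_assoc]
      rw [h2]
      simp [Matrix.trace, Matrix.diag, Matrix.mul_apply]
    simp_rw [step1]
    have contF : Continuous fun b : G => (ρ b : Matrix (Fin n) (Fin n) ℂ)
        * (ρ a⁻¹ : Matrix (Fin n) (Fin n) ℂ) * (ρ b⁻¹ : Matrix (Fin n) (Fin n) ℂ) :=
      (hc.matrix_mul continuous_const).matrix_mul (hc.comp continuous_inv)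
    rw [integral_finset_sum _ (fun i _ => cont_integrable_aux μ
      (by exact continuous_finset_sum _ fun j _ => (contF.matrix_elem i j).mul continuous_const))]
    have hterm : ∀ i j : Fin n,
        (∫ b, ((ρ b : Matrix (Fin n) (Fin n) ℂ) * (ρ a⁻¹ : Matrix (Fin n) (Fin n) ℂ)
              * (ρ b⁻¹ : Matrix (Fin n) (Fin n) ℂ)) i j
            * ((ρ x : Matrix (Fin n) (Fin n) ℂ) * (ρ a : Matrix (Fin n) (Fin n) ℂ)) j i ∂μ)
          = (((ρ a⁻¹ : Matrix (Fin n) (Fin n) ℂ)).trace / n * (if i = j then 1 else 0))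
            * ((ρ x : Matrix (Fin n) (Fin n) ℂ) * (ρ a : Matrix (Fin n) (Fin n) ℂ)) j i := by
      intro i j
      rw [integral_mul_const, hSe (ρ a⁻¹ : Matrix (Fin n) (Fin n) ℂ) i j]
    calc ∑ i, ∫ b, ∑ j, ((ρ b : Matrix (Fin n) (Fin n) ℂ) * (ρ a⁻¹ : Matrix (Fin n) (Fin n) ℂ)
              * (ρ b⁻¹ : Matrix (Fin n) (Fin n) ℂ)) i j
            * ((ρ x : Matrix (Fin n) (Fin n) ℂ) * (ρ a : Matrix (Fin n) (Fin n) ℂ)) j i ∂μ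
        = ∑ i, ∑ j, ∫ b, ((ρ b : Matrix (Fin n) (Fin n) ℂ) * (ρ a⁻¹ : Matrix (Fin n) (Fin n) ℂ)
              * (ρ b⁻¹ : Matrix (Fin n) (Fin n) ℂ)) i j
            * ((ρ x : Matrix (Fin n) (Fin n) ℂ) * (ρ a : Matrix (Fin n) (Fin n) ℂ)) j i ∂μ := by
          refine Finset.sum_congr rfl fun i _ => ?_
          exact integral_finset_sum _ (fun j _ => cont_integrable_aux μ
            ((contF.matrix_elem i j).mul continuous_const))
      _ = ((ρ a⁻¹ : Matrix (Fin n) (Fin n) ℂ)).trace / n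
            * ((ρ x : Matrix (Fin n) (Fin n) ℂ) * (ρ a : Matrix (Fin n) (Fin n) ℂ)).trace := by
          simp_rw [hterm]
          simp [Matrix.trace, Matrix.diag, ite_mul, Finset.mul_sum]
  simp_rw [inner_eq]
  -- orthogonality relation for matrix coefficients
  have key : ∀ k l j m : Fin n,
      (∫ a, (ρ a : Matrix (Fin n) (Fin n) ℂ) k l * (ρ a⁻¹ : Matrix (Fin n) (Fin n) ℂ) j m ∂μ)
        = ((if l = j then (1 : ℂ) else 0) / n) * (if k = m then 1 else 0) := by
    intro k l j m
    have h := hSe (Matrix.single l j (1 : ℂ)) k m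
    have h2 : ∀ a : G, ((ρ a : Matrix (Fin n) (Fin n) ℂ)
          * (Matrix.single l j (1 : ℂ))
          * (ρ a⁻¹ : Matrix (Fin n) (Fin n) ℂ) : Matrix (Fin n) (Fin n) ℂ) k m
        = (ρ a : Matrix (Fin n) (Fin n) ℂ) k l * (ρ a⁻¹ : Matrix (Fin n) (Fin n) ℂ) j m := by
      intro a
      simp [Matrix.mul_apply, Matrix.single, ite_and, mul_assoc]
    simp only [h2] at h
    rw [h]
    simp [Matrix.trace, Matrix.diag, Matrix.single, ite_and, eq_comm,
      div_mul_eq_mul_div]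
  -- outer integral
  have expand : ∀ a : G,
      ((ρ a⁻¹ : Matrix (Fin n) (Fin n) ℂ)).trace / n
          * ((ρ x : Matrix (Fin n) (Fin n) ℂ) * (ρ a : Matrix (Fin n) (Fin n) ℂ)).trace
        = ∑ j, ∑ l, ∑ k, ((ρ x : Matrix (Fin n) (Fin n) ℂ) l k / n)
            * ((ρ a : Matrix (Fin n) (Fin n) ℂ) k l
              * (ρ a⁻¹ : Matrix (Fin n) (Fin n) ℂ) j j) := by
    intro a
    simp only [Matrix.trace, Matrix.diag, Matrix.mul_apply]
    rw [Finset.sum_div, Finset.sum_mul]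
    refine Finset.sum_congr rfl fun j _ => ?_
    rw [Finset.mul_sum]
    refine Finset.sum_congr rfl fun l _ => ?_
    rw [Finset.mul_sum]
    refine Finset.sum_congr rfl fun k _ => ?_
    ring
  simp_rw [expand]
  have contfa : ∀ j l k : Fin n, Continuous fun a : G =>
      ((ρ x : Matrix (Fin n) (Fin n) ℂ) l k / n)
        * ((ρ a : Matrix (Fin n) (Fin n) ℂ) k l * (ρ a⁻¹ : Matrix (Fin n) (Fin n) ℂ) j j) :=
    fun j l k => continuous_const.mul ((hc.matrix_elem k l).mul (contRinv.matrix_elem j j))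
  rw [integral_finset_sum _ (fun j _ => cont_integrable_aux μ
    (continuous_finset_sum _ fun l _ => continuous_finset_sum _ fun k _ => contfa j l k))]
  have colval : ∀ j : Fin n,
      (∫ a, ∑ l, ∑ k, ((ρ x : Matrix (Fin n) (Fin n) ℂ) l k / n)
          * ((ρ a : Matrix (Fin n) (Fin n) ℂ) k l
            * (ρ a⁻¹ : Matrix (Fin n) (Fin n) ℂ) j j) ∂μ)
        = (ρ x : Matrix (Fin n) (Fin n) ℂ) j j / (n : ℂ) ^ 2 := by
    intro j
    rw [integral_finset_sum _ (fun l _ => cont_integrable_aux μ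
      (continuous_finset_sum _ fun k _ => contfa j l k))]
    have : ∀ l : Fin n, (∫ a, ∑ k, ((ρ x : Matrix (Fin n) (Fin n) ℂ) l k / n)
          * ((ρ a : Matrix (Fin n) (Fin n) ℂ) k l
            * (ρ a⁻¹ : Matrix (Fin n) (Fin n) ℂ) j j) ∂μ)
        = ∑ k, ((ρ x : Matrix (Fin n) (Fin n) ℂ) l k / n)
            * (((if l = j then (1 : ℂ) else 0) / n) * (if k = j then 1 else 0)) := by
      intro l
      rw [integral_finset_sum _ (fun k _ => cont_integrable_aux μ (contfa j l k))]
      refine Finset.sum_congr rfl fun k _ => ?_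
      rw [integral_const_mul, key k l j j]
    simp_rw [this]
    simp only [mul_ite, mul_one, mul_zero, ite_mul, zero_mul, zero_div, Finset.sum_ite_eq',
      Finset.mem_univ, if_true]
    have hterm2 : ∀ l : Fin n, (ρ x : Matrix (Fin n) (Fin n) ℂ) l j / n
          * ((if l = j then (1 : ℂ) else 0) / n)
        = if l = j then (ρ x : Matrix (Fin n) (Fin n) ℂ) j j / (n : ℂ) ^ 2 else 0 := by
      intro l
      by_cases hl : l = j
      · subst hl; simp only [if_true]; ring
      · simp [hl]
    rw [Finset.sum_congr rfl fun l _ => hterm2 l, Finset.sum_ite_eq' Finset.univ j]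
    simp
  simp_rw [colval]
  rw [← Finset.sum_div, Matrix.trace]
  rfl
end
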